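/- arXiv:2603.20538 — 7 statements merged into one kernel-verified Lean document; each statement's English description precedes it below -/
import Mathlib

section
/- Let X and U be normed vector spaces, let L > 0, let π : X → U be L-Lipschitz, and let q : U → U be a binning quantizer with error ε_q > 0, i.e. ‖q(u) − u‖ ≤ ε_q for all u ∈ U. Let ε′ > 2ε_q and set δ₀ := (ε′ − 2ε_q)/L > 0. Then for all x, x′ ∈ X: if ‖x − x′‖ ≤ δ₀ then ‖q(π(x)) − q(π(x′))‖ ≤ ε′; equivalently, for all x, x′, 𝟙{‖q(π(x)) − q(π(x′))‖ > ε′} ≤ 𝟙{‖x − x′‖ > δ₀}, so the quantized policy q∘π is ε′-relaxed total-variation continuous with the nontrivial modulus κ(r) = 𝟙{r > δ₀}. -/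
/-- **A binning quantizer applied to a Lipschitz deterministic policy is ε′-RTVC with a
nontrivial modulus.** If `π` is `L`-Lipschitz, `q` is a binning quantizer with error `ε_q`
(`‖q u − u‖ ≤ ε_q` for all `u`), `ε′ > 2 ε_q` and `δ₀ = (ε′ − 2 ε_q)/L`, then
`‖x − x′‖ ≤ δ₀` implies `‖q(π x) − q(π x′)‖ ≤ ε′`; equivalently the indicator inequality
`𝟙{‖q(π x) − q(π x′)‖ > ε′} ≤ 𝟙{‖x − x′‖ > δ₀}` holds for all `x, x′`, i.e. `q ∘ π` is
ε′-RTVC with modulus `κ r = 𝟙{r > δ₀}`. -/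
theorem binning_quantizer_rtvc
    {X U : Type*} [NormedAddCommGroup X] [NormedSpace ℝ X]
    [NormedAddCommGroup U] [NormedSpace ℝ U]
    (L : ℝ) (hL : 0 < L)
    (π : X → U) (hπ : ∀ x x' : X, ‖π x - π x'‖ ≤ L * ‖x - x'‖)
    (q : U → U) (ε_q : ℝ) (hε_q : 0 < ε_q)
    (hq : ∀ u : U, ‖q u - u‖ ≤ ε_q)
    (ε' : ℝ) (hε' : 2 * ε_q < ε')
    (δ₀ : ℝ) (hδ₀ : δ₀ = (ε' - 2 * ε_q) / L) :
    (∀ x x' : X, ‖x - x'‖ ≤ δ₀ → ‖q (π x) - q (π x')‖ ≤ ε') ∧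
    (∀ x x' : X,
      (if ε' < ‖q (π x) - q (π x')‖ then (1 : ℝ) else 0) ≤
        (if δ₀ < ‖x - x'‖ then (1 : ℝ) else 0)) := by
  have key : ∀ x x' : X, ‖x - x'‖ ≤ δ₀ → ‖q (π x) - q (π x')‖ ≤ ε' := by
    intro x x' h
    have h1 : ‖q (π x) - q (π x')‖ ≤ ‖q (π x) - π x‖ + ‖π x - π x'‖ + ‖π x' - q (π x')‖ := by
      have := norm_add₃_le (a := q (π x) - π x) (b := π x - π x') (c := π x' - q (π x'))
      simpa using this
    have h2 : ‖π x' - q (π x')‖ ≤ ε_q := by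
      rw [norm_sub_rev]; exact hq _
    have h3 : ‖π x - π x'‖ ≤ L * δ₀ := le_trans (hπ x x')
      (mul_le_mul_of_nonneg_left h hL.le)
    have h4 : L * δ₀ = ε' - 2 * ε_q := by
      rw [hδ₀]; field_simp
    nlinarith [hq (π x)]
  refine ⟨key, fun x x' => ?_⟩
  by_cases hx : δ₀ < ‖x - x'‖
  · simp [hx]
    split <;> norm_num
  · push_neg at hx
    have := key x x' hx
    simp [not_lt.mpr this]
    positivity
end

section
/- Let μ be a Borel probability measure on ℝ^d that is absolutely continuous with respect to Lebesgue measure, with a density that is strictly positive Lebesgue-almost everywhere. Then there exists a measurable map f : [0,1]^d → ℝ^d such that the pushforward under f of the uniform probability measure on [0,1]^d equals μ, and f is injective on a set of full measure: there is a Borel set Ω₀ ⊆ [0,1]^d of uniform measure one such that f restricted to Ω₀ is injective. -/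
open MeasureTheory ProbabilityTheory Set Filter Function

/-!
Both the cube (for `d > 0`) and `ℝ^d` are uncountable standard Borel spaces, so Borel
isomorphisms with `ℝ` reduce the statement to two atomless probability measures `ρ`, `ν` on `ℝ`,
where the monotone rearrangement `quantile ν ∘ cdf ρ` works. `quantile ρ` pushes the uniform
measure on `(0, 1)` to `ρ` and `cdf ρ` is a left inverse of it there, hence `cdf ρ` pushes `ρ`
back to the uniform measure. In particular its level sets are `ρ`-null, and a monotone function is
injective off its level sets through rational points; `quantile ν` is injective on `(0, 1)`.
-/

namespace MeasureTheory

variable {α β γ : Type*} [MeasurableSpace α]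

def AEInjective (f : α → β) (μ : Measure α) : Prop :=
  ∃ s, MeasurableSet s ∧ μ sᶜ = 0 ∧ InjOn f s

lemma _root_.Function.Injective.aeInjective {f : α → β} (hf : Injective f) (μ : Measure α) :
    AEInjective f μ :=
  ⟨univ, .univ, by simp, hf.injOn⟩

lemma AEInjective.comp [MeasurableSpace β] {μ : Measure α} {ν : Measure β} {f : α → β}
    {g : β → γ} (hg : AEInjective g ν) (hf : AEInjective f μ)
    (hfν : Measure.QuasiMeasurePreserving f μ ν) :
    AEInjective (g ∘ f) μ := by
  obtain ⟨s, hs, hsc, hgs⟩ := hg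
  obtain ⟨t, ht, htc, hft⟩ := hf
  refine ⟨t ∩ f ⁻¹' s, ht.inter (hfν.measurable hs), ?_, ?_⟩
  · rw [compl_inter, ← preimage_compl]
    exact measure_union_null htc (hfν.preimage_null hsc)
  · exact hgs.comp (hft.mono inter_subset_left) fun _ hx => hx.2

lemma Measure.AbsolutelyContinuous.nullSingletonClass {μ ν : Measure α} [NullSingletonClass ν]
    (h : μ ≪ ν) : NullSingletonClass μ :=
  ⟨fun x => h (measure_singleton x)⟩

lemma nullSingletonClass_map_of_injective [MeasurableSpace β] [MeasurableSingletonClass β]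
    {μ : Measure α} [NullSingletonClass μ] {f : α → β} (hf : Measurable f) (hinj : Injective f) :
    NullSingletonClass (μ.map f) :=
  ⟨fun y => by
    rw [Measure.map_apply hf (measurableSet_singleton y)]
    exact (subsingleton_singleton.preimage hinj).measure_zero μ⟩

lemma not_countable_of_nullSingletonClass (μ : Measure α) [IsProbabilityMeasure μ]
    [NullSingletonClass μ] : ¬Countable α := fun _ => by
  simpa using (countable_univ : (univ : Set α).Countable).measure_zero μ

end MeasureTheory

lemma Monotone.injOn_compl_iUnion_preimage_rat {β : Type*} [PartialOrder β] {f : ℝ → β}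
    (hf : Monotone f) : InjOn f (⋃ r : ℚ, f ⁻¹' {f r})ᶜ := by
  intro x hx y hy hxy
  by_contra hne
  wlog hlt : x < y generalizing x y
  · exact this hy hx hxy.symm (Ne.symm hne) ((not_lt.1 hlt).lt_of_ne' hne)
  obtain ⟨r, hxr, hry⟩ := exists_rat_btwn hlt
  exact hx (mem_iUnion.2 ⟨r, le_antisymm (hf hxr.le) ((hf hry.le).trans hxy.ge)⟩)

namespace ProbabilityTheory

variable (ν : Measure ℝ)

noncomputable def quantile (u : ℝ) : ℝ :=
  if u ∈ Ioo 0 1 then sInf {x | u ≤ cdf ν x} else 0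

variable {ν}

lemma bddBelow_setOf_le_cdf {u : ℝ} (hu : 0 < u) : BddBelow {x | u ≤ cdf ν x} := by
  obtain ⟨B, hB⟩ := eventually_atBot.1 ((tendsto_cdf_atBot ν).eventually (eventually_lt_nhds hu))
  exact ⟨B, fun x hx => le_of_not_gt fun hxB => (hB x hxB.le).not_ge hx⟩

lemma le_cdf_quantile {u : ℝ} (hu : u ∈ Ioo 0 1) : u ≤ cdf ν (quantile ν u) := by
  rw [quantile, if_pos hu]
  have hne : {x | u ≤ cdf ν x}.Nonempty :=
    ((tendsto_cdf_atTop ν).eventually (eventually_ge_nhds hu.2)).exists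
  refine ge_of_tendsto (((cdf ν).right_continuous _).tendsto.mono_left
    (nhdsWithin_mono _ Ioi_subset_Ici_self)) ?_
  filter_upwards [self_mem_nhdsWithin] with x hx
  obtain ⟨y, hy, hyx⟩ := exists_lt_of_csInf_lt hne hx
  exact hy.trans (monotone_cdf ν hyx.le)

lemma quantile_le_iff {u x : ℝ} (hu : u ∈ Ioo 0 1) : quantile ν u ≤ x ↔ u ≤ cdf ν x :=
  ⟨fun h => (le_cdf_quantile hu).trans (monotone_cdf ν h), fun h => by
    rw [quantile, if_pos hu]
    exact csInf_le (bddBelow_setOf_le_cdf hu.1) h⟩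

variable (ν)

lemma measurable_quantile : Measurable (quantile ν) := by
  refine measurable_of_Iic fun x => ?_
  have : quantile ν ⁻¹' Iic x = Ioo 0 1 ∩ Iic (cdf ν x) ∪ (Ioo 0 1)ᶜ ∩ {_u | 0 ≤ x} := by
    ext u
    by_cases hu : u ∈ Ioo (0 : ℝ) 1
    · simp [hu, quantile_le_iff hu]
    · simp [hu, quantile]
  rw [this]
  exact (measurableSet_Ioo.inter measurableSet_Iic).union
    (measurableSet_Ioo.compl.inter (.const _))

variable [IsProbabilityMeasure ν]

lemma leftLim_cdf [NullSingletonClass ν] (x : ℝ) : leftLim (cdf ν) x = cdf ν x := by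
  have h := (cdf ν).measure_singleton x
  rw [measure_cdf, measure_singleton, eq_comm, ENNReal.ofReal_eq_zero, sub_nonpos] at h
  exact le_antisymm ((monotone_cdf ν).leftLim_le le_rfl) h

variable {ν} in
lemma cdf_quantile [NullSingletonClass ν] {u : ℝ} (hu : u ∈ Ioo 0 1) :
    cdf ν (quantile ν u) = u := by
  refine le_antisymm ?_ (le_cdf_quantile hu)
  rw [← leftLim_cdf]
  refine le_of_tendsto ((monotone_cdf ν).tendsto_leftLim _) ?_
  filter_upwards [self_mem_nhdsWithin] with x hx
  exact (not_le.1 (mt (quantile_le_iff hu).2 (not_le.2 hx))).le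

theorem measurePreserving_quantile :
    MeasurePreserving (quantile ν) (volume.restrict (Ioo 0 1)) ν := by
  refine ⟨measurable_quantile ν, Measure.ext_of_Iic _ _ fun x => ?_⟩
  have hpre : quantile ν ⁻¹' Iic x ∩ Ioo 0 1 = Iic (cdf ν x) ∩ Ioo 0 1 :=
    Set.ext fun u => and_congr_left fun hu => quantile_le_iff hu
  rw [Measure.map_apply (measurable_quantile ν) measurableSet_Iic, ← ofReal_cdf,
    Measure.restrict_apply' measurableSet_Ioo, hpre, ← Measure.restrict_apply' measurableSet_Ioo,
    Measure.restrict_congr_set Ioo_ae_eq_Ioc, Measure.restrict_apply' measurableSet_Ioc,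
    Iic_inter_Ioc_of_le (cdf_le_one ν x), Real.volume_Ioc, sub_zero]

theorem measurePreserving_cdf [NullSingletonClass ν] :
    MeasurePreserving (cdf ν) ν (volume.restrict (Ioo 0 1)) := by
  refine ⟨(monotone_cdf ν).measurable, ?_⟩
  have hid : cdf ν ∘ quantile ν =ᵐ[volume.restrict (Ioo 0 1)] id := by
    filter_upwards [ae_restrict_mem measurableSet_Ioo] with u hu using cdf_quantile hu
  calc ν.map (cdf ν) = ((volume.restrict (Ioo 0 1)).map (quantile ν)).map (cdf ν) := by
        rw [(measurePreserving_quantile ν).map_eq]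
    _ = (volume.restrict (Ioo 0 1)).map (cdf ν ∘ quantile ν) :=
        Measure.map_map (monotone_cdf ν).measurable (measurable_quantile ν)
    _ = volume.restrict (Ioo 0 1) := by rw [Measure.map_congr hid, Measure.map_id]

lemma aeInjective_quantile [NullSingletonClass ν] :
    AEInjective (quantile ν) (volume.restrict (Ioo 0 1)) :=
  ⟨Ioo 0 1, measurableSet_Ioo, by simp,
    LeftInvOn.injOn fun _ hu => cdf_quantile hu⟩

lemma aeInjective_cdf [NullSingletonClass ν] : AEInjective (cdf ν) ν := by
  refine ⟨_, (MeasurableSet.iUnion fun r => (monotone_cdf ν).measurable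
    (measurableSet_singleton _)).compl, ?_, (monotone_cdf ν).injOn_compl_iUnion_preimage_rat⟩
  rw [compl_compl]
  exact measure_iUnion_null fun r => (measurePreserving_cdf ν).preimage_null (measure_singleton _)

end ProbabilityTheory

theorem exists_measurePreserving_aeInjective {X Y : Type*} [MeasurableSpace X]
    [StandardBorelSpace X] [MeasurableSpace Y] [StandardBorelSpace Y]
    (P : Measure X) [IsProbabilityMeasure P] [NullSingletonClass P]
    (μ : Measure Y) [IsProbabilityMeasure μ] [NullSingletonClass μ] :
    ∃ f : X → Y, MeasurePreserving f P μ ∧ AEInjective f P := by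
  let eX : X ≃ᵐ ℝ := PolishSpace.measurableEquivOfNotCountable
    (not_countable_of_nullSingletonClass P) not_countable
  let eY : Y ≃ᵐ ℝ := PolishSpace.measurableEquivOfNotCountable
    (not_countable_of_nullSingletonClass μ) not_countable
  set ρ := P.map eX
  set ν := μ.map eY
  have := nullSingletonClass_map_of_injective (μ := P) eX.measurable eX.injective
  have := nullSingletonClass_map_of_injective (μ := μ) eY.measurable eY.injective
  have := Measure.isProbabilityMeasure_map (μ := P) eX.measurable.aemeasurable
  have := Measure.isProbabilityMeasure_map (μ := μ) eY.measurable.aemeasurable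
  have hX : MeasurePreserving eX P ρ := eX.measurable.measurePreserving P
  have hF := measurePreserving_cdf ρ
  have hT : MeasurePreserving (quantile ν ∘ cdf ρ) ρ ν := (measurePreserving_quantile ν).comp hF
  have hTi : AEInjective (quantile ν ∘ cdf ρ) ρ :=
    (aeInjective_quantile ν).comp (aeInjective_cdf ρ) hF.quasiMeasurePreserving
  refine ⟨eY.symm ∘ (quantile ν ∘ cdf ρ) ∘ eX, (eY.measurePreserving_symm μ).comp (hT.comp hX), ?_⟩
  exact (eY.symm.injective.aeInjective ν).comp
    (hTi.comp (eX.injective.aeInjective P) hX.quasiMeasurePreserving)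
    (hT.comp hX).quasiMeasurePreserving

theorem exists_invertible_noise_representation_general
    (d : ℕ) (μ : Measure (Fin d → ℝ)) [IsProbabilityMeasure μ]
    (hac : μ ≪ (volume : Measure (Fin d → ℝ))) :
    ∃ f : (Fin d → ℝ) → (Fin d → ℝ),
      Measurable f ∧
      Measure.map f
          ((volume : Measure (Fin d → ℝ)).restrict
            (Set.univ.pi fun _ => Set.Icc (0 : ℝ) 1)) = μ ∧
      ∃ Ω₀ : Set (Fin d → ℝ),
        MeasurableSet Ω₀ ∧
        Ω₀ ⊆ Set.univ.pi (fun _ => Set.Icc (0 : ℝ) 1) ∧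
        ((volume : Measure (Fin d → ℝ)).restrict
            (Set.univ.pi fun _ => Set.Icc (0 : ℝ) 1)) Ω₀ = 1 ∧
        Set.InjOn f Ω₀ := by
  set cube : Set (Fin d → ℝ) := univ.pi fun _ => Icc 0 1
  set P := (volume : Measure (Fin d → ℝ)).restrict cube
  have hcube : MeasurableSet cube := .univ_pi fun _ => measurableSet_Icc
  have hvol : volume cube = 1 := by simp [cube, Real.volume_Icc_pi]
  have : IsProbabilityMeasure P := ⟨by simp [P, hvol]⟩
  rcases Nat.eq_zero_or_pos d with rfl | hd
  · refine ⟨id, measurable_id, ?_, cube, hcube, subset_rfl, by simp [P, hvol], injOn_id _⟩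
    rw [Measure.map_id]
    ext s -
    rcases s.eq_empty_or_nonempty with rfl | hs
    · simp
    · simp [Subsingleton.eq_univ_of_nonempty hs]
  · have : Nonempty (Fin d) := ⟨⟨0, hd⟩⟩
    have := hac.nullSingletonClass
    obtain ⟨f, hf, Ω₀, hΩ₀, hΩ₀c, hinj⟩ := exists_measurePreserving_aeInjective P μ
    refine ⟨f, hf.measurable, hf.map_eq, Ω₀ ∩ cube, hΩ₀.inter hcube, inter_subset_right, ?_,
      hinj.mono inter_subset_left⟩
    rw [Measure.restrict_apply (hΩ₀.inter hcube), inter_assoc, inter_self,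
      ← Measure.restrict_apply hΩ₀, ← prob_compl_eq_zero_iff hΩ₀, hΩ₀c]

/-- **Invertible noise representation (Knothe–Rosenblatt) of a positive density on ℝ^d.**
If `μ` is a Borel probability measure on `ℝ^d` that is absolutely continuous w.r.t.
Lebesgue measure with a.e. strictly positive density, then there is a measurable map
`f : [0,1]^d → ℝ^d` pushing the uniform measure on the cube forward to `μ`, and `f` is
injective on a Borel set of full uniform measure contained in the cube. -/
theorem exists_invertible_noise_representation
    (d : ℕ) (μ : Measure (Fin d → ℝ)) [IsProbabilityMeasure μ]
    (hac : μ ≪ (volume : Measure (Fin d → ℝ)))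
    (hpos : ∀ᵐ x ∂(volume : Measure (Fin d → ℝ)), 0 < μ.rnDeriv volume x) :
    ∃ f : (Fin d → ℝ) → (Fin d → ℝ),
      Measurable f ∧
      Measure.map f
          ((volume : Measure (Fin d → ℝ)).restrict
            (Set.univ.pi fun _ => Set.Icc (0 : ℝ) 1)) = μ ∧
      ∃ Ω₀ : Set (Fin d → ℝ),
        MeasurableSet Ω₀ ∧
        Ω₀ ⊆ Set.univ.pi (fun _ => Set.Icc (0 : ℝ) 1) ∧
        ((volume : Measure (Fin d → ℝ)).restrict
            (Set.univ.pi fun _ => Set.Icc (0 : ℝ) 1)) Ω₀ = 1 ∧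
        Set.InjOn f Ω₀ :=
  exists_invertible_noise_representation_general d μ hac
end

section
/- Let m₁, m₂ ∈ ℝ and σ > 0, and let N(m,σ²) denote the Gaussian probability measure on ℝ with mean m and variance σ². Then TV(N(m₁,σ²), N(m₂,σ²)) ≤ |m₁ − m₂| / (σ·√(2π)). Consequently, if X is a normed space and μ : X → ℝ is L-Lipschitz, then for all x, x′ ∈ X, TV(N(μ(x),σ²), N(μ(x′),σ²)) ≤ L·‖x − x′‖ / (σ·√2), i.e. a Gaussian policy with Lipschitz mean map is total-variation continuous with a linear modulus. -/
/-!
The density of `N(m₁, v)` exceeds that of `N(m₂, v)` (for `m₂ ≤ m₁`) exactly on the half-line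
`[c, ∞)` above the midpoint `c` of the means, so `N(m₁) s - N(m₂) s` is largest for that
half-line. Shifting, this maximal difference is the `N(m₂, v)`-mass of an interval of length
`m₁ - m₂`, which is at most that length times the peak density `1/√(2πv)`. The Lipschitz statement
then follows from `|μ x - μ x'| ≤ L‖x - x'‖` and `√2 ≤ √(2π)`.
-/

open MeasureTheory ProbabilityTheory
open scoped ENNReal

/-- Total variation distance between two measures. -/
noncomputable def tvDist {𝒳 : Type*} [MeasurableSpace 𝒳] (P Q : Measure 𝒳) : ℝ :=
  ⨆ A : {s : Set 𝒳 // MeasurableSet s}, |(P A.1).toReal - (Q A.1).toReal|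

open Set Real
open scoped NNReal

section TotalVariation

variable {𝒳 : Type*} [MeasurableSpace 𝒳]

lemma tvDist_comm (P Q : Measure 𝒳) : tvDist P Q = tvDist Q P :=
  iSup_congr fun _ ↦ abs_sub_comm _ _

/-- For probability measures the one-sided bound suffices: `Q s - P s = P sᶜ - Q sᶜ`. -/
lemma tvDist_le_of_forall_measureReal_sub_le {P Q : Measure 𝒳} [IsProbabilityMeasure P]
    [IsProbabilityMeasure Q] {b : ℝ} (h : ∀ s, MeasurableSet s → P.real s - Q.real s ≤ b) :
    tvDist P Q ≤ b := by
  have hb : 0 ≤ b := by simpa using h univ MeasurableSet.univ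
  refine Real.iSup_le (fun ⟨s, hs⟩ ↦ abs_sub_le_iff.2 ⟨h s hs, ?_⟩) hb
  have hcompl := h sᶜ hs.compl
  rw [probReal_compl_eq_one_sub hs, probReal_compl_eq_one_sub hs] at hcompl
  change Q.real s - P.real s ≤ b
  linarith

end TotalVariation

lemma setIntegral_le_setIntegral_of_nonneg_on_of_nonpos_off {α : Type*} [MeasurableSpace α]
    {μ : Measure α} {g : α → ℝ} (hg : Integrable g μ) {s t : Set α} (hs : MeasurableSet s)
    (ht : MeasurableSet t) (h_nonneg : ∀ x ∈ s, 0 ≤ g x) (h_nonpos : ∀ x ∉ s, g x ≤ 0) :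
    ∫ x in t, g x ∂μ ≤ ∫ x in s, g x ∂μ := by
  rw [← integral_inter_add_sdiff hs hg.integrableOn]
  have h_diff : ∫ x in t \ s, g x ∂μ ≤ 0 :=
    setIntegral_nonpos (ht.diff hs) fun x hx ↦ h_nonpos x hx.2
  have h_inter : ∫ x in t ∩ s, g x ∂μ ≤ ∫ x in s, g x ∂μ :=
    setIntegral_mono_set hg.integrableOn (ae_restrict_of_forall_mem hs h_nonneg)
      inter_subset_right.eventuallyLE
  linarith

section Gaussian

variable {v : ℝ≥0}

lemma gaussianPDFReal_le_gaussianPDFReal {m₁ m₂ x : ℝ} (h : (x - m₁) ^ 2 ≤ (x - m₂) ^ 2) :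
    gaussianPDFReal m₂ v x ≤ gaussianPDFReal m₁ v x := by
  simp only [gaussianPDFReal]
  gcongr

lemma gaussianPDFReal_le_inv_sqrt (m x : ℝ) :
    gaussianPDFReal m v x ≤ (√(2 * π * v))⁻¹ := by
  rw [gaussianPDFReal]
  refine mul_le_of_le_one_right (by positivity) (exp_le_one_iff.2 ?_)
  exact div_nonpos_of_nonpos_of_nonneg (neg_nonpos.2 (sq_nonneg _)) (by positivity)

lemma gaussianReal_real_eq_setIntegral (m : ℝ) (hv : v ≠ 0) (s : Set ℝ) :
    (gaussianReal m v).real s = ∫ x in s, gaussianPDFReal m v x := by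
  rw [measureReal_def, gaussianReal_apply_eq_integral m hv,
    ENNReal.toReal_ofReal (integral_nonneg fun x ↦ gaussianPDFReal_nonneg m v x)]

lemma gaussianReal_real_Ico_le (m : ℝ) (hv : v ≠ 0) {a b : ℝ} (hab : a ≤ b) :
    (gaussianReal m v).real (Ico a b) ≤ (b - a) / √(2 * π * v) := by
  rw [gaussianReal_real_eq_setIntegral m hv]
  calc ∫ x in Ico a b, gaussianPDFReal m v x
      ≤ ∫ _ in Ico a b, (√(2 * π * v))⁻¹ :=
        setIntegral_mono_on (integrable_gaussianPDFReal m v).integrableOn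
          (integrableOn_const measure_Ico_lt_top.ne) measurableSet_Ico
          fun x _ ↦ gaussianPDFReal_le_inv_sqrt m x
    _ = (b - a) / √(2 * π * v) := by
        rw [setIntegral_const, volume_real_Ico_of_le hab, smul_eq_mul, div_eq_mul_inv]

lemma gaussianReal_add_const_real_Ici (m y c : ℝ) :
    (gaussianReal (m + y) v).real (Ici c) = (gaussianReal m v).real (Ici (c - y)) := by
  rw [← gaussianReal_map_add_const,
    map_measureReal_apply (measurable_add_const y) measurableSet_Ici]
  congr 1
  ext x
  simp

lemma gaussianReal_real_Ici_sub_le (hv : v ≠ 0) {m₁ m₂ : ℝ} (h : m₂ ≤ m₁) (c : ℝ) :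
    (gaussianReal m₁ v).real (Ici c) - (gaussianReal m₂ v).real (Ici c)
      ≤ (m₁ - m₂) / √(2 * π * v) := by
  have h_shift : (gaussianReal m₁ v).real (Ici c)
      = (gaussianReal m₂ v).real (Ici (c - (m₁ - m₂))) := by
    rw [← gaussianReal_add_const_real_Ici, add_sub_cancel]
  have h_split : Ici (c - (m₁ - m₂)) = Ico (c - (m₁ - m₂)) c ∪ Ici c :=
    (Ico_union_Ici_eq_Ici (by linarith)).symm
  rw [h_shift, h_split, measureReal_union
    ((Iio_disjoint_Ici le_rfl).mono_left Ico_subset_Iio_self) measurableSet_Ici,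
    add_sub_cancel_right]
  simpa using gaussianReal_real_Ico_le m₂ hv (a := c - (m₁ - m₂)) (b := c) (by linarith)

lemma gaussianReal_real_sub_le (hv : v ≠ 0) {m₁ m₂ : ℝ} (h : m₂ ≤ m₁) {s : Set ℝ}
    (hs : MeasurableSet s) :
    (gaussianReal m₁ v).real s - (gaussianReal m₂ v).real s ≤ (m₁ - m₂) / √(2 * π * v) := by
  have h_int := (integrable_gaussianPDFReal m₁ v).sub (integrable_gaussianPDFReal m₂ v)
  have h_real_sub (t : Set ℝ) : (gaussianReal m₁ v).real t - (gaussianReal m₂ v).real t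
      = ∫ x in t, (gaussianPDFReal m₁ v x - gaussianPDFReal m₂ v x) := by
    rw [gaussianReal_real_eq_setIntegral m₁ hv, gaussianReal_real_eq_setIntegral m₂ hv,
      integral_sub (integrable_gaussianPDFReal m₁ v).integrableOn
        (integrable_gaussianPDFReal m₂ v).integrableOn]
  calc (gaussianReal m₁ v).real s - (gaussianReal m₂ v).real s
      ≤ (gaussianReal m₁ v).real (Ici ((m₁ + m₂) / 2))
          - (gaussianReal m₂ v).real (Ici ((m₁ + m₂) / 2)) := by
        rw [h_real_sub, h_real_sub]
        refine setIntegral_le_setIntegral_of_nonneg_on_of_nonpos_off h_int measurableSet_Ici hs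
          (fun x hx ↦ sub_nonneg.2 (gaussianPDFReal_le_gaussianPDFReal ?_))
          (fun x hx ↦ sub_nonpos.2 (gaussianPDFReal_le_gaussianPDFReal ?_))
        · have : (m₁ + m₂) / 2 ≤ x := hx
          nlinarith
        · have : x < (m₁ + m₂) / 2 := not_le.1 hx
          nlinarith
    _ ≤ (m₁ - m₂) / √(2 * π * v) := gaussianReal_real_Ici_sub_le hv h _

lemma tvDist_gaussianReal_le (hv : v ≠ 0) (m₁ m₂ : ℝ) :
    tvDist (gaussianReal m₁ v) (gaussianReal m₂ v) ≤ |m₁ - m₂| / √(2 * π * v) := by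
  wlog h : m₂ ≤ m₁ generalizing m₁ m₂
  · rw [tvDist_comm, abs_sub_comm]
    exact this m₂ m₁ (le_of_not_ge h)
  rw [abs_of_nonneg (sub_nonneg.2 h)]
  exact tvDist_le_of_forall_measureReal_sub_le fun s hs ↦ gaussianReal_real_sub_le hv h hs

end Gaussian

/-- **Gaussian policies with Lipschitz mean are total-variation continuous with a linear
modulus.** For Gaussians of common variance `σ²`,
`TV(N(m₁,σ²), N(m₂,σ²)) ≤ |m₁ − m₂|/(σ√(2π))`; consequently, for an `L`-Lipschitz mean map
`μ : X → ℝ`, `TV(N(μ x, σ²), N(μ x′, σ²)) ≤ L‖x − x′‖/(σ√2)`. -/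
theorem gaussian_tv_lipschitz_mean
    (σ : ℝ) (hσ : 0 < σ) :
    (∀ m₁ m₂ : ℝ,
      tvDist (gaussianReal m₁ ⟨σ ^ 2, sq_nonneg σ⟩) (gaussianReal m₂ ⟨σ ^ 2, sq_nonneg σ⟩)
        ≤ |m₁ - m₂| / (σ * Real.sqrt (2 * Real.pi))) ∧
    (∀ (X : Type*) [NormedAddCommGroup X] [NormedSpace ℝ X]
      (L : ℝ) (μ : X → ℝ), (∀ x x' : X, |μ x - μ x'| ≤ L * ‖x - x'‖) →
      ∀ x x' : X,
        tvDist (gaussianReal (μ x) ⟨σ ^ 2, sq_nonneg σ⟩)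
            (gaussianReal (μ x') ⟨σ ^ 2, sq_nonneg σ⟩)
          ≤ L * ‖x - x'‖ / (σ * Real.sqrt 2)) := by
  set v : ℝ≥0 := ⟨σ ^ 2, sq_nonneg σ⟩
  have hv : v ≠ 0 := fun h ↦
    hσ.ne' ((pow_eq_zero_iff two_ne_zero).1 (congrArg NNReal.toReal h))
  have h_sqrt : √(2 * π * v) = σ * √(2 * π) := by
    rw [show ((v : ℝ)) = σ ^ 2 from rfl, mul_comm, sqrt_mul (sq_nonneg σ), sqrt_sq hσ.le]
  have h_gauss (m₁ m₂ : ℝ) : tvDist (gaussianReal m₁ v) (gaussianReal m₂ v)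
      ≤ |m₁ - m₂| / (σ * √(2 * π)) := h_sqrt ▸ tvDist_gaussianReal_le hv m₁ m₂
  refine ⟨h_gauss, fun X _ _ L μ hL x x' ↦ (h_gauss (μ x) (μ x')).trans ?_⟩
  have h_den : σ * √2 ≤ σ * √(2 * π) := by
    gcongr
    nlinarith [pi_gt_three]
  exact div_le_div₀ ((abs_nonneg _).trans (hL x x')) (hL x x') (by positivity) h_den
end

section
/- Let A, B > 0 with λ := A + B < 1, and define f : ℝ → ℝ by f(x) = A·x + B·arctan(x). Let γ be the standard Gaussian measure N(0,1) on ℝ, and for t ≥ 1 let μ_t be the pushforward of γ under the (t−1)-fold iterate f^{∘(t−1)}. Then for every c ≥ 0, ℓ ≥ 0, and t ≥ 1: μ_t([c, c+ℓ]) ≤ (ℓ / (√(2π)·A^{t−1})) · exp(−c² / (2·λ^{2(t−1)})). In particular, for d > 0 and ε_q > 0, μ_t([d·ε_q, (d+1)·ε_q]) ≤ (ε_q / (√(2π)·A^{t−1})) · exp(−d²·ε_q² / (2·λ^{2(t−1)})). -/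
open MeasureTheory ProbabilityTheory
open scoped ENNReal

private lemma arctan_le_self_aux {x : ℝ} (hx : 0 ≤ x) : Real.arctan x ≤ x := by
  have h0 : 0 ≤ Real.arctan x := by
    rw [← Real.arctan_zero]
    exact Real.arctan_strictMono.monotone hx
  have := Real.le_tan h0 (Real.arctan_lt_pi_div_two x)
  rwa [Real.tan_arctan] at this

private lemma iter_gap_aux {A : ℝ} {f : ℝ → ℝ} (hA : 0 < A)
    (hgap : ∀ x y : ℝ, x ≤ y → A * (y - x) ≤ f y - f x) :
    ∀ n : ℕ, ∀ x y : ℝ, x ≤ y → A ^ n * (y - x) ≤ f^[n] y - f^[n] x := by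
  intro n
  induction n with
  | zero => intro x y hxy; simp
  | succ m ih =>
    intro x y hxy
    have h1 := ih x y hxy
    have h2 : f^[m] x ≤ f^[m] y := by nlinarith [pow_pos hA m]
    have h3 := hgap _ _ h2
    simp only [Function.iterate_succ_apply']
    calc A ^ (m+1) * (y - x) = A * (A ^ m * (y - x)) := by ring
      _ ≤ A * (f^[m] y - f^[m] x) := by nlinarith
      _ ≤ f (f^[m] y) - f (f^[m] x) := h3

private lemma iter_up_aux {lam : ℝ} {f : ℝ → ℝ} (hlam0 : 0 < lam)
    (hfnn : ∀ x : ℝ, 0 ≤ x → 0 ≤ f x) (hfle : ∀ x : ℝ, 0 ≤ x → f x ≤ lam * x) :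
    ∀ n : ℕ, ∀ x : ℝ, 0 ≤ x → 0 ≤ f^[n] x ∧ f^[n] x ≤ lam ^ n * x := by
  intro n
  induction n with
  | zero => intro x hx; simp [hx]
  | succ m ih =>
    intro x hx
    obtain ⟨h1, h2⟩ := ih (f x) (hfnn x hx)
    refine ⟨by simpa [Function.iterate_succ_apply] using h1, ?_⟩
    rw [Function.iterate_succ_apply]
    calc f^[m] (f x) ≤ lam ^ m * f x := h2
      _ ≤ lam ^ m * (lam * x) :=
          mul_le_mul_of_nonneg_left (hfle x hx) (le_of_lt (pow_pos hlam0 m))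
      _ = lam ^ (m + 1) * x := by ring

private lemma key_bound
    (A B : ℝ) (hA : 0 < A) (hB : 0 < B) (hlam : A + B < 1)
    (f : ℝ → ℝ) (hf : ∀ x, f x = A * x + B * Real.arctan x)
    (c ℓ : ℝ) (hc : 0 ≤ c) (hℓ : 0 ≤ ℓ) (n : ℕ) :
    ((gaussianReal 0 1).map (f^[n]) (Set.Icc c (c + ℓ))).toReal
      ≤ ℓ / (Real.sqrt (2 * Real.pi) * A ^ n)
          * Real.exp (-(c ^ 2) / (2 * (A + B) ^ (2 * n))) := by
  have hπ : 0 < Real.sqrt (2 * Real.pi) := Real.sqrt_pos.mpr (by positivity)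
  have hAn : (0:ℝ) < A ^ n := pow_pos hA n
  have hlam0 : (0:ℝ) < A + B := by linarith
  have hln : (0:ℝ) < (A + B) ^ n := pow_pos hlam0 n
  -- basic properties of f
  have hgap : ∀ x y : ℝ, x ≤ y → A * (y - x) ≤ f y - f x := by
    intro x y hxy
    have harc : Real.arctan x ≤ Real.arctan y := Real.arctan_strictMono.monotone hxy
    rw [hf, hf]; nlinarith
  have hmono : StrictMono f := by
    intro x y hxy
    have := hgap x y hxy.le
    nlinarith
  have hcont : Continuous f := by
    have h1 : Continuous fun x : ℝ => A * x + B * Real.arctan x :=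
      (continuous_const.mul continuous_id).add
        (continuous_const.mul Real.continuous_arctan)
    have h2 : f = fun x : ℝ => A * x + B * Real.arctan x := funext hf
    rw [h2]; exact h1
  have hf0 : f 0 = 0 := by rw [hf]; simp
  have hmeas : Measurable (f^[n]) := (hcont.iterate n).measurable
  -- iterate properties
  have hitgap := iter_gap_aux hA hgap n
  have hitmono : StrictMono (f^[n]) := hmono.iterate n
  have hit0 : f^[n] 0 = 0 := Function.iterate_fixed hf0 n
  have hitup : ∀ x : ℝ, 0 ≤ x → 0 ≤ f^[n] x ∧ f^[n] x ≤ (A + B) ^ n * x := by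
    refine iter_up_aux hlam0 ?_ ?_ n
    · intro x hx
      have : 0 ≤ Real.arctan x := by
        rw [← Real.arctan_zero]; exact Real.arctan_strictMono.monotone hx
      rw [hf]; positivity
    · intro x hx
      have := arctan_le_self_aux hx
      rw [hf]; nlinarith
  -- the preimage set
  set S : Set ℝ := f^[n] ⁻¹' (Set.Icc c (c + ℓ)) with hS
  set a : ℝ := c / (A + B) ^ n with ha
  have ha0 : 0 ≤ a := div_nonneg hc hln.le
  have hSa : ∀ x ∈ S, a ≤ x := by
    intro x hx
    obtain ⟨hx1, _⟩ := hx
    have hx0 : 0 ≤ x := by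
      by_contra h
      push_neg at h
      have : f^[n] x < f^[n] 0 := hitmono h
      rw [hit0] at this; linarith
    have := (hitup x hx0).2
    rw [ha, div_le_iff₀ hln]
    linarith
  set L : ℝ := ℓ / A ^ n with hL
  have hL0 : 0 ≤ L := div_nonneg hℓ hAn.le
  have hdiam : ∀ x ∈ S, ∀ y ∈ S, x - y ≤ L := by
    intro x hx y hy
    rcases le_total x y with h | h
    · linarith
    · have := hitgap y x h
      obtain ⟨hx1, hx2⟩ := hx
      obtain ⟨hy1, hy2⟩ := hy
      rw [hL, le_div_iff₀ hAn]
      nlinarith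
  -- rewrite the map
  rw [Measure.map_apply hmeas measurableSet_Icc, ← hS]
  -- the density bound constant
  set C : ℝ := (Real.sqrt (2 * Real.pi))⁻¹ * Real.exp (-(a ^ 2) / 2) with hC
  have hC0 : 0 ≤ C := by positivity
  have hexp : -(a ^ 2) / 2 = -(c ^ 2) / (2 * (A + B) ^ (2 * n)) := by
    rw [ha, div_pow, ← pow_mul, Nat.mul_comm n 2]
    ring
  have hRHS : L * C = ℓ / (Real.sqrt (2 * Real.pi) * A ^ n)
      * Real.exp (-(c ^ 2) / (2 * (A + B) ^ (2 * n))) := by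
    rw [hC, hL, hexp]; ring
  rw [← hRHS]
  -- case on S empty or not
  rcases Set.eq_empty_or_nonempty S with hSe | ⟨x₀, hx₀⟩
  · rw [hSe]; simp; positivity
  · have hbdd : BddBelow S := ⟨a, fun x hx => hSa x hx⟩
    set i : ℝ := sInf S with hi
    have hai : a ≤ i := le_csInf ⟨x₀, hx₀⟩ (fun x hx => hSa x hx)
    have hSsub : S ⊆ Set.Icc i (i + L) := by
      intro x hx
      refine ⟨csInf_le hbdd hx, ?_⟩
      have : x - L ≤ i := le_csInf ⟨x₀, hx₀⟩ (fun y hy => by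
        have := hdiam x hx y hy; linarith)
      linarith
    have hmono' : gaussianReal 0 1 S ≤ gaussianReal 0 1 (Set.Icc i (i + L)) :=
      measure_mono hSsub
    have hdens : ∀ x ∈ Set.Icc i (i + L), gaussianPDFReal 0 1 x ≤ C := by
      intro x hx
      have hxa : a ≤ x := le_trans hai hx.1
      have heq : gaussianPDFReal 0 1 x
          = (Real.sqrt (2 * Real.pi))⁻¹ * Real.exp (-(x ^ 2) / 2) := by
        unfold gaussianPDFReal
        norm_num
      rw [heq, hC]
      have hxx : -(x ^ 2) / 2 ≤ -(a ^ 2) / 2 := by nlinarith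
      exact mul_le_mul_of_nonneg_left (Real.exp_le_exp.mpr hxx) (by positivity)
    have hIcc : gaussianReal 0 1 (Set.Icc i (i + L)) ≤ ENNReal.ofReal (L * C) := by
      rw [gaussianReal_apply 0 one_ne_zero]
      calc ∫⁻ x in Set.Icc i (i + L), gaussianPDF 0 1 x
          ≤ ∫⁻ _ in Set.Icc i (i + L), ENNReal.ofReal C := by
            refine setLIntegral_mono measurable_const ?_
            intro x hx
            exact ENNReal.ofReal_le_ofReal (hdens x hx)
        _ = ENNReal.ofReal C * volume (Set.Icc i (i + L)) := by
            rw [setLIntegral_const]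
        _ = ENNReal.ofReal C * ENNReal.ofReal L := by
            rw [Real.volume_Icc]; norm_num
        _ = ENNReal.ofReal (L * C) := by
            rw [← ENNReal.ofReal_mul hC0, mul_comm]
    refine ENNReal.toReal_le_of_le_ofReal (by positivity) ?_
    exact le_trans hmono' hIcc

/-- **Tail bound for the pushforward of a Gaussian under iterates of the closed-loop
expert dynamics** `f(x) = A·x + B·arctan x` with `A, B > 0` and `λ = A + B < 1`.
If `μ_t` is the law of `f^{∘(t−1)}(X₁)` with `X₁ ∼ N(0,1)`, then for `c, ℓ ≥ 0` and
`t ≥ 1`,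
`μ_t([c, c+ℓ]) ≤ (ℓ/(√(2π)·A^{t−1}))·exp(−c²/(2λ^{2(t−1)}))`;
in particular for `d > 0`, `ε_q > 0`,
`μ_t([d ε_q, (d+1) ε_q]) ≤ (ε_q/(√(2π)·A^{t−1}))·exp(−d²ε_q²/(2λ^{2(t−1)}))`. -/
theorem gaussian_pushforward_interval_bound
    (A B : ℝ) (hA : 0 < A) (hB : 0 < B) (hlam : A + B < 1)
    (f : ℝ → ℝ) (hf : ∀ x, f x = A * x + B * Real.arctan x) :
    (∀ (c ℓ : ℝ), 0 ≤ c → 0 ≤ ℓ → ∀ t : ℕ, 1 ≤ t →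
      ((gaussianReal 0 1).map (f^[t - 1]) (Set.Icc c (c + ℓ))).toReal
        ≤ ℓ / (Real.sqrt (2 * Real.pi) * A ^ (t - 1))
            * Real.exp (-(c ^ 2) / (2 * (A + B) ^ (2 * (t - 1))))) ∧
    (∀ (d εq : ℝ), 0 < d → 0 < εq → ∀ t : ℕ, 1 ≤ t →
      ((gaussianReal 0 1).map (f^[t - 1]) (Set.Icc (d * εq) ((d + 1) * εq))).toReal
        ≤ εq / (Real.sqrt (2 * Real.pi) * A ^ (t - 1))
            * Real.exp (-(d ^ 2 * εq ^ 2) / (2 * (A + B) ^ (2 * (t - 1))))) := by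
  constructor
  · intro c ℓ hc hℓ t ht
    exact key_bound A B hA hB hlam f hf c ℓ hc hℓ (t - 1)
  · intro d εq hd hεq t ht
    have h := key_bound A B hA hB hlam f hf (d * εq) εq
      (by positivity) hεq.le (t - 1)
    have h1 : d * εq + εq = (d + 1) * εq := by ring
    have h2 : -((d * εq) ^ 2) = -(d ^ 2 * εq ^ 2) := by ring
    rw [h1, h2] at h
    exact h
end

section
/- Let λ ∈ (0,1) and σ > 0, and let f : ℝ → ℝ be λ-Lipschitz and odd (f(−x) = −f(x) for all x). Let X₁ ∼ N(0,1) and let (ω_t)_{t≥1} be i.i.d. N(0,σ²) random variables, all mutually independent, and define the random recursion X_{t+1} = f(X_t) + ω_t for t ≥ 1. Then for every t ≥ 1: the law of X_t is symmetric (X_t and −X_t have the same law), 𝔼[X_t] = 0, and for every r ≥ 0, ℙ(X_t ≥ r) ≤ exp(−r² / (2·τ_t²)), where τ_t² := λ^{2(t−1)} + σ²·(1 − λ^{2(t−1)})/(1 − λ²). -/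
/-!
Induct on `t`, carrying three facts about `X t`: it is measurable with respect to
`ξ 0, …, ξ (t - 1)` (so independent of `ξ t`), its law is symmetric, and it is sub-Gaussian
with parameter `τ_t²`. Symmetry passes to `f (X t) + ξ t` because `f` is odd and `ξ t` is
symmetric and independent. For a symmetric `Y` the mgf is `𝔼[cosh (s Y)]`, and `cosh` is
increasing in `|·|`; as `|f x| ≤ λ |x|`, the variable `f (X t)` is sub-Gaussian with parameter
`λ² τ_t²`, and the independent `N(0, σ²)` noise adds `σ²`, which is the recursion solved by
`τ_t²`. The tail bound is the Chernoff bound for sub-Gaussian variables.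
-/

open MeasureTheory ProbabilityTheory
open scoped ENNReal

open Real
open scoped NNReal

namespace ProbabilityTheory

variable {Ω : Type*} [MeasurableSpace Ω] {μ : Measure Ω}

lemma identDistrib_neg_of_map_eq_gaussianReal {X : Ω → ℝ} (hX : Measurable X) {v : ℝ≥0}
    (h : μ.map X = gaussianReal 0 v) : IdentDistrib X (fun ω ↦ -X ω) μ μ where
  aemeasurable_fst := hX.aemeasurable
  aemeasurable_snd := hX.neg.aemeasurable
  map_eq := by
    rw [show (fun ω ↦ -X ω) = Neg.neg ∘ X from rfl, ← Measure.map_map measurable_neg hX, h,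
      gaussianReal_map_neg, neg_zero]

lemma hasSubgaussianMGF_of_map_eq_gaussianReal {X : Ω → ℝ} (hX : AEMeasurable X μ) {v : ℝ≥0}
    (h : μ.map X = gaussianReal 0 v) : HasSubgaussianMGF X v μ := by
  rw [← HasSubgaussianMGF.id_map_iff hX, h]
  refine ⟨fun t ↦ integrable_exp_mul_gaussianReal t, fun t ↦ ?_⟩
  simp [mgf_id_gaussianReal]

lemma IdentDistrib.mgf_apply_neg_eq {X : Ω → ℝ} (hX : IdentDistrib X (fun ω ↦ -X ω) μ μ)
    (t : ℝ) : mgf X μ (-t) = mgf X μ t := by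
  rw [← mgf_neg]
  exact ((hX.comp (measurable_exp.comp (measurable_const_mul t))).integral_eq).symm

lemma integrable_cosh_mul {X : Ω → ℝ}
    (hX : ∀ t, Integrable (fun ω ↦ exp (t * X ω)) μ) (t : ℝ) :
    Integrable (fun ω ↦ cosh (t * X ω)) μ := by
  simp_rw [cosh_eq, ← neg_mul]
  exact ((hX t).add (hX (-t))).div_const 2

lemma integral_cosh_mul_eq_mgf {X : Ω → ℝ}
    (hX : ∀ t, Integrable (fun ω ↦ exp (t * X ω)) μ) (t : ℝ) :
    ∫ ω, cosh (t * X ω) ∂μ = (mgf X μ t + mgf X μ (-t)) / 2 := by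
  simp_rw [cosh_eq, ← neg_mul]
  rw [integral_div, integral_add (hX t) (hX (-t))]
  rfl

lemma HasSubgaussianMGF.of_abs_le_of_identDistrib_neg {Y Z : Ω → ℝ} {c : ℝ≥0}
    (hZ : HasSubgaussianMGF Z c μ) (hY : IdentDistrib Y (fun ω ↦ -Y ω) μ μ)
    (hle : ∀ ω, |Y ω| ≤ |Z ω|) : HasSubgaussianMGF Y c μ := by
  have hcosh : ∀ t ω, cosh (t * Y ω) ≤ cosh (t * Z ω) := fun t ω ↦ by
    rw [cosh_le_cosh, abs_mul, abs_mul]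
    exact mul_le_mul_of_nonneg_left (hle ω) (abs_nonneg t)
  have hint : ∀ t, Integrable (fun ω ↦ exp (t * Y ω)) μ := fun t ↦
    ((integrable_cosh_mul hZ.integrable_exp_mul t).const_mul 2).mono'
      (hY.aemeasurable_fst.const_mul t).exp.aestronglyMeasurable
      (ae_of_all _ fun ω ↦ by
        rw [norm_of_nonneg (exp_pos _).le, ← cosh_add_sinh]
        linarith [sinh_lt_cosh (t * Y ω), hcosh t ω])
  refine ⟨hint, fun t ↦ ?_⟩
  calc mgf Y μ t = ∫ ω, cosh (t * Y ω) ∂μ := by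
        rw [integral_cosh_mul_eq_mgf hint, hY.mgf_apply_neg_eq]; ring
    _ ≤ ∫ ω, cosh (t * Z ω) ∂μ :=
        integral_mono (integrable_cosh_mul hint t)
          (integrable_cosh_mul hZ.integrable_exp_mul t) (hcosh t)
    _ = (mgf Z μ t + mgf Z μ (-t)) / 2 := integral_cosh_mul_eq_mgf hZ.integrable_exp_mul t
    _ ≤ exp (c * t ^ 2 / 2) := by
        have h₁ := hZ.mgf_le t
        have h₂ := hZ.mgf_le (-t)
        rw [neg_sq] at h₂
        linarith

lemma IdentDistrib.comp_neg_of_odd {X : Ω → ℝ} (hX : IdentDistrib X (fun ω ↦ -X ω) μ μ)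
    {f : ℝ → ℝ} (hf : Measurable f) (hodd : ∀ x, f (-x) = -f x) :
    IdentDistrib (fun ω ↦ f (X ω)) (fun ω ↦ -f (X ω)) μ μ := by
  simpa only [Function.comp_def, hodd] using hX.comp hf

lemma IdentDistrib.add_neg_of_indepFun [IsFiniteMeasure μ] {X W : Ω → ℝ}
    (hX : IdentDistrib X (fun ω ↦ -X ω) μ μ) (hW : IdentDistrib W (fun ω ↦ -W ω) μ μ)
    (hXW : IndepFun X W μ) :
    IdentDistrib (fun ω ↦ X ω + W ω) (fun ω ↦ -(X ω + W ω)) μ μ := by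
  simpa only [Function.comp_def, neg_add] using
    (hX.prodMk hW hXW (hXW.comp measurable_neg measurable_neg)).comp measurable_add

lemma HasSubgaussianMGF.comp_of_odd_of_abs_le {X : Ω → ℝ} {c : ℝ≥0}
    (hX : HasSubgaussianMGF X c μ) (hXsymm : IdentDistrib X (fun ω ↦ -X ω) μ μ)
    {f : ℝ → ℝ} (hf : Measurable f) (hodd : ∀ x, f (-x) = -f x) {lam : ℝ}
    (hle : ∀ x, |f x| ≤ lam * |x|) :
    HasSubgaussianMGF (fun ω ↦ f (X ω)) (⟨lam ^ 2, sq_nonneg lam⟩ * c) μ :=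
  (hX.const_mul lam).of_abs_le_of_identDistrib_neg (hXsymm.comp_neg_of_odd hf hodd) fun ω ↦
    (hle _).trans <| by
      rw [abs_mul]
      exact mul_le_mul_of_nonneg_right (le_abs_self lam) (abs_nonneg _)

lemma iIndepFun.indepFun_of_measurable_iSup {ι β γ : Type*} [MeasurableSpace β]
    [MeasurableSpace γ] {ξ : ι → Ω → β} (hξ : ∀ i, Measurable (ξ i)) (h : iIndepFun ξ μ)
    {S : Set ι} {j : ι} (hj : j ∉ S) {Y : Ω → γ}
    (hY : Measurable[⨆ i ∈ S, MeasurableSpace.comap (ξ i) inferInstance] Y) :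
    IndepFun Y (ξ j) μ := by
  rw [IndepFun_iff_Indep]
  have := indep_iSup_of_disjoint (fun i ↦ (hξ i).comap_le) h.iIndep
    (Set.disjoint_singleton_right.mpr hj)
  rw [iSup_singleton] at this
  exact indep_of_indep_of_le_left this hY.comap_le

theorem odd_recursion_identDistrib_neg_and_hasSubgaussianMGF [IsFiniteMeasure μ]
    {f : ℝ → ℝ} (hf : Measurable f) (hodd : ∀ x, f (-x) = -f x) {lam : ℝ}
    (hle : ∀ x, |f x| ≤ lam * |x|)
    {ξ : ℕ → Ω → ℝ} (hξ : ∀ t, Measurable (ξ t)) (hindep : iIndepFun ξ μ)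
    (hξsymm : ∀ t, IdentDistrib (ξ t) (fun ω ↦ -ξ t ω) μ μ) {c : ℕ → ℝ≥0} {s : ℝ≥0}
    (hξ0 : HasSubgaussianMGF (ξ 0) (c 1) μ) (hξs : ∀ t, 1 ≤ t → HasSubgaussianMGF (ξ t) s μ)
    (hcrec : ∀ t, 1 ≤ t → c (t + 1) = ⟨lam ^ 2, sq_nonneg lam⟩ * c t + s)
    {X : ℕ → Ω → ℝ} (hX1 : X 1 = ξ 0)
    (hXrec : ∀ t, 1 ≤ t → ∀ ω, X (t + 1) ω = f (X t ω) + ξ t ω)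
    {t : ℕ} (ht : 1 ≤ t) :
    IdentDistrib (X t) (fun ω ↦ -X t ω) μ μ ∧ HasSubgaussianMGF (X t) (c t) μ := by
  let past (t : ℕ) : MeasurableSpace Ω :=
    ⨆ i ∈ Set.Iio t, MeasurableSpace.comap (ξ i) inferInstance
  have hξpast : ∀ t, Measurable[past (t + 1)] (ξ t) := fun t ↦
    (comap_measurable (ξ t)).mono (le_iSup₂ (f := fun i (_ : i ∈ Set.Iio (t + 1)) ↦
      MeasurableSpace.comap (ξ i) inferInstance) t (Nat.lt_succ_self t)) le_rfl
  suffices Measurable[past t] (X t) ∧ IdentDistrib (X t) (fun ω ↦ -X t ω) μ μ ∧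
      HasSubgaussianMGF (X t) (c t) μ from this.2
  induction t, ht using Nat.le_induction with
  | base =>
    rw [hX1]
    exact ⟨hξpast 0, hξsymm 0, hξ0⟩
  | succ t ht ih =>
    obtain ⟨hXpast, hXsymm, hXsub⟩ := ih
    have hindep_t : IndepFun (fun ω ↦ f (X t ω)) (ξ t) μ :=
      (hindep.indepFun_of_measurable_iSup hξ (S := Set.Iio t) (lt_irrefl t) hXpast).comp hf
        measurable_id
    rw [funext (hXrec t ht), hcrec t ht]
    refine ⟨?_, (hXsymm.comp_neg_of_odd hf hodd).add_neg_of_indepFun (hξsymm t) hindep_t,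
      (hXsub.comp_of_odd_of_abs_le hXsymm hf hodd hle).add_of_indepFun (hξs t ht) hindep_t⟩
    have hmono : past t ≤ past (t + 1) := biSup_mono fun i hi ↦ Nat.lt_succ_of_lt hi
    exact (hf.comp (hXpast.mono hmono le_rfl)).add (hξpast t)

end ProbabilityTheory

/-- The paper's `τ_t²`. -/
noncomputable def varianceProxy (lam σ : ℝ) (t : ℕ) : ℝ :=
  lam ^ (2 * (t - 1)) + σ ^ 2 * (1 - lam ^ (2 * (t - 1))) / (1 - lam ^ 2)

lemma varianceProxy_one (lam σ : ℝ) : varianceProxy lam σ 1 = 1 := by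
  simp [varianceProxy]

lemma varianceProxy_succ {lam : ℝ} (hlam : lam ^ 2 ≠ 1) (σ : ℝ) {t : ℕ} (ht : 1 ≤ t) :
    varianceProxy lam σ (t + 1) = lam ^ 2 * varianceProxy lam σ t + σ ^ 2 := by
  obtain ⟨s, rfl⟩ := Nat.exists_eq_add_of_le' ht
  have : 1 - lam ^ 2 ≠ 0 := sub_ne_zero.mpr hlam.symm
  simp only [varianceProxy, Nat.add_sub_cancel, mul_add, mul_one, pow_add]
  field_simp
  ring

lemma varianceProxy_nonneg {lam : ℝ} (hlam : lam ^ 2 < 1) (σ : ℝ) (t : ℕ) :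
    0 ≤ varianceProxy lam σ t := by
  obtain ⟨hpow₀, hpow₁⟩ : 0 ≤ lam ^ (2 * (t - 1)) ∧ lam ^ (2 * (t - 1)) ≤ 1 := by
    rw [pow_mul]
    exact ⟨by positivity, pow_le_one₀ (sq_nonneg lam) hlam.le⟩
  exact add_nonneg hpow₀
    (div_nonneg (mul_nonneg (sq_nonneg σ) (sub_nonneg.mpr hpow₁)) (sub_pos.mpr hlam).le)

theorem lipschitz_odd_recursion_gaussian_concentration_general
    (lam σ : ℝ) (hlam0 : 0 < lam) (hlam1 : lam < 1)
    (f : ℝ → ℝ)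
    (hfLip : ∀ x y : ℝ, |f x - f y| ≤ lam * |x - y|)
    (hfOdd : ∀ x : ℝ, f (-x) = -f x)
    {Ω : Type*} [MeasurableSpace Ω] (P : Measure Ω) [IsProbabilityMeasure P]
    (ξ : ℕ → Ω → ℝ) (hξmeas : ∀ t, Measurable (ξ t))
    (hindep : iIndepFun ξ P)
    (hξ0 : Measure.map (ξ 0) P = gaussianReal 0 1)
    (hξt : ∀ t : ℕ, 1 ≤ t →
      Measure.map (ξ t) P = gaussianReal 0 ⟨σ ^ 2, sq_nonneg σ⟩)
    (X : ℕ → Ω → ℝ)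
    (hX1 : X 1 = ξ 0)
    (hXrec : ∀ t : ℕ, 1 ≤ t → ∀ ω, X (t + 1) ω = f (X t ω) + ξ t ω) :
    ∀ t : ℕ, 1 ≤ t →
      (Measure.map (X t) P = Measure.map (fun ω => -(X t ω)) P) ∧
      (∫ ω, X t ω ∂P = 0) ∧
      (∀ r : ℝ, 0 ≤ r →
        P {ω | r ≤ X t ω} ≤
          ENNReal.ofReal (Real.exp (-(r ^ 2) /
            (2 * (lam ^ (2 * (t - 1))
              + σ ^ 2 * (1 - lam ^ (2 * (t - 1))) / (1 - lam ^ 2)))))) := by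
  have hlam : lam ^ 2 < 1 := by nlinarith
  have hf : Measurable f := (LipschitzWith.of_dist_le' hfLip).continuous.measurable
  have hle : ∀ x, |f x| ≤ lam * |x| := fun x ↦ by
    simpa [CharZero.eq_neg_self_iff.mp (neg_zero (G := ℝ) ▸ hfOdd 0)] using hfLip x 0
  have hξsymm : ∀ t, IdentDistrib (ξ t) (fun ω ↦ -ξ t ω) P P
    | 0 => identDistrib_neg_of_map_eq_gaussianReal (hξmeas 0) hξ0
    | t + 1 => identDistrib_neg_of_map_eq_gaussianReal (hξmeas _) (hξt (t + 1) t.succ_pos)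
  let c (t : ℕ) : ℝ≥0 := ⟨varianceProxy lam σ t, varianceProxy_nonneg hlam σ t⟩
  have hc1 : c 1 = 1 := NNReal.eq (varianceProxy_one lam σ)
  intro t ht
  obtain ⟨hsymm, hsub⟩ := odd_recursion_identDistrib_neg_and_hasSubgaussianMGF hf hfOdd hle
    hξmeas hindep hξsymm (c := c)
    (hc1 ▸ hasSubgaussianMGF_of_map_eq_gaussianReal (hξmeas 0).aemeasurable hξ0)
    (fun t ht ↦ hasSubgaussianMGF_of_map_eq_gaussianReal (hξmeas t).aemeasurable (hξt t ht))
    (fun t ht ↦ NNReal.eq (varianceProxy_succ hlam.ne σ ht)) hX1 hXrec ht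
  refine ⟨hsymm.map_eq, ?_, fun r hr ↦ ?_⟩
  · linarith [hsymm.integral_eq.trans (integral_neg (X t))]
  · rw [← ofReal_measureReal]
    exact ENNReal.ofReal_le_ofReal (hsub.measure_ge_le hr)

/-- **Symmetry and Gaussian concentration for a Lipschitz odd closed-loop recursion with
Gaussian noise.** Let `f : ℝ → ℝ` be `λ`-Lipschitz (`λ ∈ (0,1)`) and odd, let
`X₁ ∼ N(0,1)` and `(ω_t)_{t≥1}` i.i.d. `N(0,σ²)`, all mutually independent (encoded by
the family `ξ`, with `ξ 0 = X₁` and `ξ t = ω_t` for `t ≥ 1`), and define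
`X_{t+1} = f(X_t) + ω_t`.  Then for every `t ≥ 1` the law of `X_t` is symmetric,
`𝔼[X_t] = 0`, and `ℙ(X_t ≥ r) ≤ exp(−r²/(2 τ_t²))` for every `r ≥ 0`, where
`τ_t² = λ^{2(t−1)} + σ²·(1 − λ^{2(t−1)})/(1 − λ²)`. -/
theorem lipschitz_odd_recursion_gaussian_concentration
    (lam σ : ℝ) (hlam0 : 0 < lam) (hlam1 : lam < 1) (hσ : 0 < σ)
    (f : ℝ → ℝ)
    (hfLip : ∀ x y : ℝ, |f x - f y| ≤ lam * |x - y|)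
    (hfOdd : ∀ x : ℝ, f (-x) = -f x)
    {Ω : Type*} [MeasurableSpace Ω] (P : Measure Ω) [IsProbabilityMeasure P]
    (ξ : ℕ → Ω → ℝ) (hξmeas : ∀ t, Measurable (ξ t))
    (hindep : iIndepFun ξ P)
    (hξ0 : Measure.map (ξ 0) P = gaussianReal 0 1)
    (hξt : ∀ t : ℕ, 1 ≤ t →
      Measure.map (ξ t) P = gaussianReal 0 ⟨σ ^ 2, sq_nonneg σ⟩)
    (X : ℕ → Ω → ℝ)
    (hX1 : X 1 = ξ 0)
    (hXrec : ∀ t : ℕ, 1 ≤ t → ∀ ω, X (t + 1) ω = f (X t ω) + ξ t ω) :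
    ∀ t : ℕ, 1 ≤ t →
      (Measure.map (X t) P = Measure.map (fun ω => -(X t ω)) P) ∧
      (∫ ω, X t ω ∂P = 0) ∧
      (∀ r : ℝ, 0 ≤ r →
        P {ω | r ≤ X t ω} ≤
          ENNReal.ofReal (Real.exp (-(r ^ 2) /
            (2 * (lam ^ (2 * (t - 1))
              + σ ^ 2 * (1 - lam ^ (2 * (t - 1))) / (1 - lam ^ 2)))))) :=
  lipschitz_odd_recursion_gaussian_concentration_general lam σ hlam0 hlam1 f hfLip hfOdd P ξ hξmeas
    hindep hξ0 hξt X hX1 hXrec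
end

section
/- Let κ be a Markov kernel on a measurable space X, and let ν be a κ-invariant probability measure on X (i.e. the composition ν.bind κ equals ν). Let V : X → ℝ be measurable with V(x) ≥ 1 for all x and ∫ V dν < ∞, let λ ∈ (0,1) and c > 0, let C ⊆ X be measurable, and suppose the Foster–Lyapunov drift condition ∫ V(y) κ(x)(dy) ≤ λ·V(x) + c·𝟙_C(x) holds for every x ∈ X. Then ν(C) ≥ (1−λ)·(∫ V dν)/c ≥ (1−λ)/c. -/
/-!
Integrating the drift inequality against `ν` and using invariance, `∫⁻ (∫⁻ V dκ x) dν = ∫⁻ V dν`,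
gives `M ≤ λ M + c ν(C)` for `M = ∫ V dν`, which is finite; hence `(1 - λ) M ≤ c ν(C)`,
and `M ≥ 1` because `V ≥ 1` and `ν` is a probability measure.
-/

open MeasureTheory ProbabilityTheory
open scoped ENNReal

namespace ProbabilityTheory.Kernel

variable {X : Type*} [MeasurableSpace X] {κ : Kernel X X} {ν : Measure X}

theorem Invariant.lintegral_lintegral (hinv : Invariant κ ν) {f : X → ℝ≥0∞}
    (hf : AEMeasurable f ν) : ∫⁻ x, ∫⁻ y, f y ∂κ x ∂ν = ∫⁻ x, f x ∂ν := by
  rw [← Measure.lintegral_bind κ.measurable.aemeasurable (by rwa [hinv.def]), hinv.def]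

theorem Invariant.lintegral_le_of_drift (hinv : Invariant κ ν) {V : X → ℝ≥0∞}
    (hV : Measurable V) {a b : ℝ≥0∞} {C : Set X} (hC : MeasurableSet C)
    (hdrift : ∀ x, ∫⁻ y, V y ∂κ x ≤ a * V x + b * C.indicator 1 x) :
    ∫⁻ x, V x ∂ν ≤ a * ∫⁻ x, V x ∂ν + b * ν C :=
  calc ∫⁻ x, V x ∂ν = ∫⁻ x, ∫⁻ y, V y ∂κ x ∂ν := (hinv.lintegral_lintegral hV.aemeasurable).symm
    _ ≤ ∫⁻ x, a * V x + b * C.indicator 1 x ∂ν := lintegral_mono hdrift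
    _ = a * ∫⁻ x, V x ∂ν + b * ν C := by
      rw [lintegral_add_left (hV.const_mul a), lintegral_const_mul a hV,
        lintegral_const_mul b (measurable_one.indicator hC), lintegral_indicator_one hC]

end ProbabilityTheory.Kernel

theorem invariant_measure_drift_set_lower_bound_general
    {X : Type*} [MeasurableSpace X]
    (κ : Kernel X X)
    (ν : Measure X) [IsProbabilityMeasure ν]
    (hinv : Kernel.Invariant κ ν)
    (V : X → ℝ) (hVmeas : Measurable V) (hV1 : ∀ x, 1 ≤ V x)
    (hVint : ∫⁻ x, ENNReal.ofReal (V x) ∂ν < ⊤)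
    (lam c : ℝ) (hlam0 : 0 < lam) (hlam1 : lam < 1) (hc : 0 < c)
    (C : Set X) (hC : MeasurableSet C)
    (hdrift : ∀ x, ∫⁻ y, ENNReal.ofReal (V y) ∂(κ x) ≤
      ENNReal.ofReal (lam * V x + c * C.indicator (fun _ => (1 : ℝ)) x)) :
    (1 - lam) * (∫⁻ x, ENNReal.ofReal (V x) ∂ν).toReal / c ≤ (ν C).toReal ∧
    (1 - lam) / c ≤ (ν C).toReal := by
  set M := ∫⁻ x, ENNReal.ofReal (V x) ∂ν
  have hdrift_ennreal : ∀ x, ∫⁻ y, ENNReal.ofReal (V y) ∂(κ x) ≤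
      ENNReal.ofReal lam * ENNReal.ofReal (V x) + ENNReal.ofReal c * C.indicator 1 x := by
    intro x
    have hV0 : 0 ≤ V x := zero_le_one.trans (hV1 x)
    by_cases hx : x ∈ C
    · simpa [hx, ← ENNReal.ofReal_mul hlam0.le, ← ENNReal.ofReal_add (mul_nonneg hlam0.le hV0) hc.le]
        using hdrift x
    · simpa [hx, ENNReal.ofReal_mul, hlam0.le] using hdrift x
  have hM : M ≤ ENNReal.ofReal lam * M + ENNReal.ofReal c * ν C :=
    hinv.lintegral_le_of_drift (ENNReal.measurable_ofReal.comp hVmeas) hC hdrift_ennreal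
  have hM_real : M.toReal ≤ lam * M.toReal + c * (ν C).toReal := by
    have := ENNReal.toReal_mono (by finiteness) hM
    rwa [ENNReal.toReal_add (by finiteness) (by finiteness), ENNReal.toReal_mul, ENNReal.toReal_mul,
      ENNReal.toReal_ofReal hlam0.le, ENNReal.toReal_ofReal hc.le] at this
  have hM_one : 1 ≤ M.toReal := by
    have : 1 ≤ M := calc
      1 = ∫⁻ _, 1 ∂ν := by simp
      _ ≤ M := lintegral_mono fun x => ENNReal.one_le_ofReal.2 (hV1 x)
    simpa using ENNReal.toReal_mono hVint.ne this
  have hbound : (1 - lam) * M.toReal / c ≤ (ν C).toReal := by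
    rw [div_le_iff₀ hc]; linarith
  exact ⟨hbound,
    (div_le_div_of_nonneg_right (le_mul_of_one_le_right (by linarith) hM_one) hc.le).trans hbound⟩

/-- **Invariant mass of the drift set under a Foster–Lyapunov condition.** Let `κ` be a
Markov kernel with invariant probability measure `ν`, let `V ≥ 1` be measurable with
`∫ V dν < ∞`, and suppose the drift condition
`∫ V(y) κ(x)(dy) ≤ λ V(x) + c 𝟙_C(x)` holds for every `x`, where `λ ∈ (0,1)`, `c > 0`
and `C` is measurable.  Then `ν(C) ≥ (1−λ)(∫ V dν)/c ≥ (1−λ)/c`. -/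
theorem invariant_measure_drift_set_lower_bound
    {X : Type*} [MeasurableSpace X]
    (κ : Kernel X X) [IsMarkovKernel κ]
    (ν : Measure X) [IsProbabilityMeasure ν]
    (hinv : Kernel.Invariant κ ν)
    (V : X → ℝ) (hVmeas : Measurable V) (hV1 : ∀ x, 1 ≤ V x)
    (hVint : ∫⁻ x, ENNReal.ofReal (V x) ∂ν < ⊤)
    (lam c : ℝ) (hlam0 : 0 < lam) (hlam1 : lam < 1) (hc : 0 < c)
    (C : Set X) (hC : MeasurableSet C)
    (hdrift : ∀ x, ∫⁻ y, ENNReal.ofReal (V y) ∂(κ x) ≤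
      ENNReal.ofReal (lam * V x + c * C.indicator (fun _ => (1 : ℝ)) x)) :
    (1 - lam) * (∫⁻ x, ENNReal.ofReal (V x) ∂ν).toReal / c ≤ (ν C).toReal ∧
    (1 - lam) / c ≤ (ν C).toReal :=
  invariant_measure_drift_set_lower_bound_general κ ν hinv V hVmeas hV1 hVint lam c hlam0 hlam1 hc C
    hC hdrift
end

section
/- Let n, m ≥ 1, let S ⊆ ℝⁿ be a set, and let f : ℝⁿ × ℝᵐ → ℝⁿ satisfy ‖f(x,u) − f(x′,u′)‖ ≤ η‖x − x′‖ + C‖u − u′‖ for all x, x′ ∈ S and all u, u′ ∈ ℝᵐ, where η ∈ (0,1) and C > 0. Let μ : ℝⁿ → ℝᵐ be L_μ-Lipschitz on S. Fix H ≥ 1 and an initial state x̄₁ ∈ S, define the nominal trajectory x̄_{t+1} = f(x̄_t, μ(x̄_t)) for t = 1,…,H−1, and suppose there is ρ > 0 such that dist(x̄_t, ℝⁿ∖S) ≥ 2ρ for all t = 1,…,H. Let ζ₁,…,ζ_H ∈ ℝᵐ and w₁,…,w_H ∈ ℝⁿ be perturbations, and define the perturbed trajectory by x₁ = x̄₁ and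 x_{t+1} = f(x_t, μ(x_t) + ζ_t) + w_t. Set L_cl := η + C·L_μ and A_H := ∑_{j=0}^{H−1} L_cl^j. If C·max_{t≤H}‖ζ_t‖ + max_{t≤H}‖w_t‖ ≤ ρ/A_H, then for every t = 1,…,H: ‖x_t − x̄_t‖ ≤ ρ, and in particular x_t ∈ S. -/
open scoped ENNReal

/-- **Perturbed rollouts of a locally contractive closed-loop system stay close to the
nominal trajectory.** Suppose `f : ℝⁿ × ℝᵐ → ℝⁿ` is `η`-contractive in the state and
`C`-Lipschitz in the action on a region `S` (`η < 1`), the mean policy `μ` is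
`L_μ`-Lipschitz on `S`, and the nominal trajectory `x̄_{t+1} = f(x̄_t, μ(x̄_t))` keeps a
margin `2ρ` from `ℝⁿ∖S` over horizon `H`.  If the perturbed trajectory
`x_{t+1} = f(x_t, μ(x_t)+ζ_t) + w_t` starts at `x₁ = x̄₁` and
`C·max_t ‖ζ_t‖ + max_t ‖w_t‖ ≤ ρ/A_H` with `A_H = ∑_{j<H} (η + C·L_μ)^j`, then
`‖x_t − x̄_t‖ ≤ ρ` and `x_t ∈ S` for every `t = 1,…,H`. -/
theorem perturbed_trajectory_stays_in_region
    (n m : ℕ) (hn : 1 ≤ n) (hm : 1 ≤ m)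
    (S : Set (EuclideanSpace ℝ (Fin n)))
    (f : EuclideanSpace ℝ (Fin n) → EuclideanSpace ℝ (Fin m) → EuclideanSpace ℝ (Fin n))
    (η C : ℝ) (hη0 : 0 < η) (hη1 : η < 1) (hC : 0 < C)
    (hf : ∀ x ∈ S, ∀ x' ∈ S, ∀ u u' : EuclideanSpace ℝ (Fin m),
      ‖f x u - f x' u'‖ ≤ η * ‖x - x'‖ + C * ‖u - u'‖)
    (μ : EuclideanSpace ℝ (Fin n) → EuclideanSpace ℝ (Fin m))
    (Lμ : ℝ) (hLμ : 0 ≤ Lμ)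
    (hμ : ∀ x ∈ S, ∀ x' ∈ S, ‖μ x - μ x'‖ ≤ Lμ * ‖x - x'‖)
    (H : ℕ) (hH : 1 ≤ H)
    (xbar : ℕ → EuclideanSpace ℝ (Fin n))
    (hxbar1 : xbar 1 ∈ S)
    (hxbarrec : ∀ t : ℕ, 1 ≤ t → t < H → xbar (t + 1) = f (xbar t) (μ (xbar t)))
    (ρ : ℝ) (hρ : 0 < ρ)
    (hmargin : ∀ t : ℕ, 1 ≤ t → t ≤ H → 2 * ρ ≤ Metric.infDist (xbar t) Sᶜ)
    (ζ : ℕ → EuclideanSpace ℝ (Fin m)) (w : ℕ → EuclideanSpace ℝ (Fin n))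
    (x : ℕ → EuclideanSpace ℝ (Fin n))
    (hx1 : x 1 = xbar 1)
    (hxrec : ∀ t : ℕ, 1 ≤ t → t < H → x (t + 1) = f (x t) (μ (x t) + ζ t) + w t)
    (hsmall :
      C * (Finset.Icc 1 H).sup' (Finset.nonempty_Icc.mpr hH) (fun t => ‖ζ t‖)
        + (Finset.Icc 1 H).sup' (Finset.nonempty_Icc.mpr hH) (fun t => ‖w t‖)
        ≤ ρ / ∑ j ∈ Finset.range H, (η + C * Lμ) ^ j) :
    ∀ t : ℕ, 1 ≤ t → t ≤ H → ‖x t - xbar t‖ ≤ ρ ∧ x t ∈ S := by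
  set L : ℝ := η + C * Lμ with hL
  have hL0 : 0 < L := by positivity
  set A : ℝ := ∑ j ∈ Finset.range H, L ^ j with hA
  have hA0 : 0 < A := by
    apply Finset.sum_pos (fun j _ => pow_pos hL0 j)
    exact Finset.nonempty_range_iff.mpr (by omega)
  set ε : ℝ := C * (Finset.Icc 1 H).sup' (Finset.nonempty_Icc.mpr hH) (fun t => ‖ζ t‖)
      + (Finset.Icc 1 H).sup' (Finset.nonempty_Icc.mpr hH) (fun t => ‖w t‖) with hε
  have hζsup : ∀ t, 1 ≤ t → t ≤ H → ‖ζ t‖ ≤ (Finset.Icc 1 H).sup' (Finset.nonempty_Icc.mpr hH) (fun t => ‖ζ t‖) := by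
    intro t h1 h2
    exact Finset.le_sup' (fun t => ‖ζ t‖) (Finset.mem_Icc.mpr ⟨h1, h2⟩)
  have hwsup : ∀ t, 1 ≤ t → t ≤ H → ‖w t‖ ≤ (Finset.Icc 1 H).sup' (Finset.nonempty_Icc.mpr hH) (fun t => ‖w t‖) := by
    intro t h1 h2
    exact Finset.le_sup' (fun t => ‖w t‖) (Finset.mem_Icc.mpr ⟨h1, h2⟩)
  have hε0 : 0 ≤ ε := by
    have h1 := (norm_nonneg (ζ 1)).trans (hζsup 1 le_rfl hH)
    have h2 := (norm_nonneg (w 1)).trans (hwsup 1 le_rfl hH)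
    have := mul_nonneg hC.le h1
    linarith
  have hεA : ε * A ≤ ρ := by
    have := (div_le_div_iff₀ hA0 hA0).mp (le_refl (ρ / A))
    calc ε * A ≤ (ρ / A) * A := by
          apply mul_le_mul_of_nonneg_right _ hA0.le
          exact hsmall
      _ = ρ := by field_simp
  -- bound on partial sums
  have hBse : ∀ t : ℕ, t ≤ H → (∑ j ∈ Finset.range t, L ^ j) ≤ A := by
    intro t ht
    apply Finset.sum_le_sum_of_subset_of_nonneg
    · exact Finset.range_subset_range.mpr ht
    · intro j _ _; exact (pow_pos hL0 j).le
  have hB : ∀ t : ℕ, t ≤ H → ε * (∑ j ∈ Finset.range t, L ^ j) ≤ ρ :=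
    fun t ht => le_trans (mul_le_mul_of_nonneg_left (hBse t ht) hε0) hεA
  -- membership from closeness
  have hmem : ∀ t : ℕ, 1 ≤ t → t ≤ H → ∀ y : EuclideanSpace ℝ (Fin n),
      ‖y - xbar t‖ ≤ ρ → y ∈ S := by
    intro t h1 h2 y hy
    by_contra hyS
    have h0 : Metric.infDist (xbar t) Sᶜ ≤ dist (xbar t) y :=
      Metric.infDist_le_dist_of_mem hyS
    rw [dist_eq_norm, ← norm_neg, neg_sub] at h0
    have := hmargin t h1 h2
    linarith
  have hxbarS : ∀ t : ℕ, 1 ≤ t → t ≤ H → xbar t ∈ S := by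
    intro t h1 h2
    exact hmem t h1 h2 (xbar t) (by simp [hρ.le])
  -- main induction
  have key : ∀ t : ℕ, 1 ≤ t → t ≤ H →
      ‖x t - xbar t‖ ≤ ε * ∑ j ∈ Finset.range (t - 1), L ^ j := by
    intro t h1
    induction t, h1 using Nat.le_induction with
    | base => intro _; simp [hx1]
    | succ t h1 ih =>
      intro ht
      have htH : t < H := by omega
      have ihb := ih (le_of_lt htH)
      have hdt : ‖x t - xbar t‖ ≤ ρ :=
        le_trans ihb (hB (t - 1) (by omega))
      have hxS : x t ∈ S := hmem t h1 (le_of_lt htH) _ hdt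
      have hxbS : xbar t ∈ S := hxbarS t h1 (le_of_lt htH)
      have hstep : ‖x (t + 1) - xbar (t + 1)‖ ≤ L * ‖x t - xbar t‖ + ε := by
        rw [hxrec t h1 htH, hxbarrec t h1 htH]
        have h4 : ‖f (x t) (μ (x t) + ζ t) + w t - f (xbar t) (μ (xbar t))‖
            ≤ ‖f (x t) (μ (x t) + ζ t) - f (xbar t) (μ (xbar t))‖ + ‖w t‖ := by
          have : f (x t) (μ (x t) + ζ t) + w t - f (xbar t) (μ (xbar t))
              = (f (x t) (μ (x t) + ζ t) - f (xbar t) (μ (xbar t))) + w t := by abel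
          rw [this]; exact norm_add_le _ _
        have h5 := hf (x t) hxS (xbar t) hxbS (μ (x t) + ζ t) (μ (xbar t))
        have h6 : ‖μ (x t) + ζ t - μ (xbar t)‖ ≤ ‖μ (x t) - μ (xbar t)‖ + ‖ζ t‖ := by
          have : μ (x t) + ζ t - μ (xbar t) = (μ (x t) - μ (xbar t)) + ζ t := by abel
          rw [this]; exact norm_add_le _ _
        have h7 := hμ (x t) hxS (xbar t) hxbS
        have h8 := hζsup t h1 htH.le
        have h9 := hwsup t h1 htH.le
        have h10 : C * ‖μ (x t) + ζ t - μ (xbar t)‖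
            ≤ C * Lμ * ‖x t - xbar t‖ + C * ‖ζ t‖ := by nlinarith
        calc ‖f (x t) (μ (x t) + ζ t) + w t - f (xbar t) (μ (xbar t))‖
            ≤ ‖f (x t) (μ (x t) + ζ t) - f (xbar t) (μ (xbar t))‖ + ‖w t‖ := h4
          _ ≤ η * ‖x t - xbar t‖ + C * ‖μ (x t) + ζ t - μ (xbar t)‖ + ‖w t‖ := by linarith
          _ ≤ L * ‖x t - xbar t‖ + ε := by
              rw [hL, hε]
              nlinarith [mul_le_mul_of_nonneg_left h8 hC.le]
      have hsum : ε * ∑ j ∈ Finset.range (t + 1 - 1), L ^ j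
          = L * (ε * ∑ j ∈ Finset.range (t - 1), L ^ j) + ε := by
        have h11 : t + 1 - 1 = (t - 1) + 1 := by omega
        rw [h11, geom_sum_succ]
        ring
      rw [hsum]
      have := mul_le_mul_of_nonneg_left ihb hL0.le
      linarith
  intro t h1 h2
  have hb := le_trans (key t h1 h2) (hB (t - 1) (by omega))
  exact ⟨hb, hmem t h1 h2 _ hb⟩
end
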